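/- (Output shaping, dissipation identity (17) of Proposition 2.) Let additionally K_i, K_p > 0 and p* ∈ ℝ be constants, and suppose the closed-loop boundary condition C·w_zt(1,t) = −K_i·(w_t(1,t) − p*) − K_p·w_tt(1,t) holds for all t ≥ 0 (this is obtained by differentiating C·w_z(1,t) = −γ·U(t) with the PI controller γ·U(t) = K_i·φ(t) + K_p·(w_t(1,t) − p*) + γ·U*, φ'(t) = w_t(1,t) − p*). Define the shaped storage S_d(t) = S(t) + (K_i/2)·(w_t(1,t) − p*)². Then for every t ≥ 0, dS_d/dt(t) = −b·∫₀¹ w_tt(z,t)² dz − K_p·w_tt(1,t)² ≤ 0. -/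

import Mathlib

open MeasureTheory intervalIntegral Set Function

/-!
Differentiating under the integral sign, the velocity storage changes at the rate
`∫ (C w_zt w_ztt + ρ w_tt w_ttt)`. The time-differentiated PDE `ρ w_ttt = C w_zzt − b w_tt`
turns this into `C ∫ ∂_z (w_zt w_tt) − b ∫ w_tt²`, i.e. the boundary power `C w_zt w_tt` at
`z = 1` (it vanishes at the clamped end) minus the viscous loss. The closed-loop condition
rewrites the boundary power as `−K_i (w_t(1) − p*) w_tt(1) − K_p w_tt(1)²`, and the first
summand is exactly cancelled by the derivative of the shaping term.
-/

theorem HasDerivAt.eq_of_eqOn_Ici {E : Type*} [NormedAddCommGroup E] [NormedSpace ℝ E]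
    {f g : ℝ → E} {f' g' : E} {a t : ℝ}
    (hf : HasDerivAt f f' t) (hg : HasDerivAt g g' t) (hfg : EqOn f g (Ici a)) (ht : a ≤ t) :
    f' = g' :=
  (uniqueDiffOn_Ici a t ht).eq_deriv _ hf.hasDerivWithinAt
    (hg.hasDerivWithinAt.congr hfg (hfg ht))

theorem hasDerivAt_intervalIntegral_of_continuous {E : Type*} [NormedAddCommGroup E]
    [NormedSpace ℝ E] [CompleteSpace E] {F F' : ℝ → ℝ → E} {a b : ℝ}
    (hF : Continuous (uncurry F)) (hF' : Continuous (uncurry F'))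
    (hd : ∀ z τ, HasDerivAt (F z) (F' z τ) τ) (t : ℝ) :
    HasDerivAt (fun τ => ∫ z in a..b, F z τ) (∫ z in a..b, F' z t) t := by
  obtain ⟨M, hM⟩ := (isCompact_uIcc.prod (isCompact_closedBall t 1)).exists_bound_of_continuousOn
    hF'.continuousOn
  refine (hasDerivAt_integral_of_dominated_loc_of_deriv_le (F := fun τ z => F z τ)
    (bound := fun _ => M) (Metric.closedBall_mem_nhds t one_pos)
    (.of_forall fun τ => (hF.uncurry_right τ).aestronglyMeasurable)
    ((hF.uncurry_right t).intervalIntegrable a b) (hF'.uncurry_right t).aestronglyMeasurable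
    (.of_forall fun z hz τ hτ => hM (z, τ) ⟨uIoc_subset_uIcc hz, hτ⟩) intervalIntegrable_const
    (.of_forall fun z _ τ _ => hd z τ)).2

section VelocityStorage

variable {ρ C b a c t : ℝ} {wzt wtt wzzt wztt wttt : ℝ → ℝ → ℝ}

theorem integral_velocity_power_eq
    (hwzzt' : ∀ z, HasDerivAt (fun ζ => wzt ζ t) (wzzt z t) z)
    (hwztt' : ∀ z, HasDerivAt (fun ζ => wtt ζ t) (wztt z t) z)
    (hwttc : Continuous (uncurry wtt)) (hwzztc : Continuous (uncurry wzzt))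
    (hwzttc : Continuous (uncurry wztt))
    (hpde : ∀ z ∈ uIcc a c, ρ * wttt z t = C * wzzt z t - b * wtt z t) :
    ∫ z in a..c, (C * wzt z t * wztt z t + ρ * wtt z t * wttt z t) =
      C * (wzt c t * wtt c t - wzt a t * wtt a t) - b * ∫ z in a..c, wtt z t ^ 2 := by
  have hpointwise : ∀ z ∈ uIcc a c, C * wzt z t * wztt z t + ρ * wtt z t * wttt z t =
      C * (wzzt z t * wtt z t + wzt z t * wztt z t) - b * wtt z t ^ 2 := fun z hz => by
    linear_combination wtt z t * hpde z hz
  have hparts : ∫ z in a..c, (wzzt z t * wtt z t + wzt z t * wztt z t) =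
      wzt c t * wtt c t - wzt a t * wtt a t :=
    integral_deriv_mul_eq_sub (fun z _ => hwzzt' z) (fun z _ => hwztt' z)
      ((hwzztc.uncurry_right t).intervalIntegrable a c)
      ((hwzttc.uncurry_right t).intervalIntegrable a c)
  have hwzt_cont : Continuous fun z => wzt z t := continuous_iff_continuousAt.2 fun z =>
    (hwzzt' z).continuousAt
  rw [integral_congr hpointwise, intervalIntegral.integral_sub,
    intervalIntegral.integral_const_mul, intervalIntegral.integral_const_mul, hparts]
  all_goals exact Continuous.intervalIntegrable (by fun_prop) a c

theorem hasDerivAt_velocityStorage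
    (hwzzt' : ∀ z, HasDerivAt (fun ζ => wzt ζ t) (wzzt z t) z)
    (hwztt' : ∀ z, HasDerivAt (fun ζ => wtt ζ t) (wztt z t) z)
    (hwztt : ∀ z τ, HasDerivAt (fun τ => wzt z τ) (wztt z τ) τ)
    (hwttt : ∀ z τ, HasDerivAt (fun τ => wtt z τ) (wttt z τ) τ)
    (hwztc : Continuous (uncurry wzt)) (hwttc : Continuous (uncurry wtt))
    (hwzztc : Continuous (uncurry wzzt)) (hwzttc : Continuous (uncurry wztt))
    (hwtttc : Continuous (uncurry wttt))
    (hpde : ∀ z ∈ uIcc a c, ρ * wttt z t = C * wzzt z t - b * wtt z t) :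
    HasDerivAt (fun τ => (1/2) * ∫ z in a..c, (C * (wzt z τ)^2 + ρ * (wtt z τ)^2))
      (C * (wzt c t * wtt c t - wzt a t * wtt a t) - b * ∫ z in a..c, wtt z t ^ 2) t := by
  have hintegrand : ∀ z τ, HasDerivAt (fun τ => C * (wzt z τ)^2 + ρ * (wtt z τ)^2)
      (2 * (C * wzt z τ * wztt z τ + ρ * wtt z τ * wttt z τ)) τ := fun z τ =>
    (((hwztt z τ).pow 2).const_mul C |>.add (((hwttt z τ).pow 2).const_mul ρ)).congr_deriv
      (by ring)
  have hderiv := hasDerivAt_intervalIntegral_of_continuous (a := a) (b := c)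
    (F := fun z τ => C * (wzt z τ)^2 + ρ * (wtt z τ)^2) (by fun_prop) (by fun_prop) hintegrand t
  refine (hderiv.const_mul (1/2)).congr_deriv ?_
  rw [intervalIntegral.integral_const_mul,
    integral_velocity_power_eq hwzzt' hwztt' hwttc hwzztc hwzttc hpde]
  ring

end VelocityStorage

theorem output_shaping_dissipation_general
    (ρ C b : ℝ) (hb : 0 < b)
    (w wt wzz wzt wtt : ℝ → ℝ → ℝ)
    (hwt : ∀ z t : ℝ, HasDerivAt (fun τ => w z τ) (wt z t) t)
    (hwtt : ∀ z t : ℝ, HasDerivAt (fun τ => wt z τ) (wtt z t) t)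
    (hwztc : Continuous (Function.uncurry wzt))
    (hwttc : Continuous (Function.uncurry wtt))
    (hpde : ∀ z ∈ Set.Icc (0:ℝ) 1, ∀ t : ℝ, 0 ≤ t →
      ρ * wtt z t = C * wzz z t - b * wt z t)
    (hclamp : ∀ t : ℝ, 0 ≤ t → w 0 t = 0)
    (wzzt wztt wttt : ℝ → ℝ → ℝ)
    (hwzzt : ∀ z t : ℝ, HasDerivAt (fun τ => wzz z τ) (wzzt z t) t)
    (hwzzt' : ∀ z t : ℝ, HasDerivAt (fun ζ => wzt ζ t) (wzzt z t) z)
    (hwztt : ∀ z t : ℝ, HasDerivAt (fun τ => wzt z τ) (wztt z t) t)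
    (hwztt' : ∀ z t : ℝ, HasDerivAt (fun ζ => wtt ζ t) (wztt z t) z)
    (hwttt : ∀ z t : ℝ, HasDerivAt (fun τ => wtt z τ) (wttt z t) t)
    (hwzztc : Continuous (Function.uncurry wzzt))
    (hwzttc : Continuous (Function.uncurry wztt))
    (hwtttc : Continuous (Function.uncurry wttt))
    (Ki Kp pstar : ℝ) (hKp : 0 < Kp)
    (hcl : ∀ t : ℝ, 0 ≤ t →
      C * wzt 1 t = -Ki * (wt 1 t - pstar) - Kp * wtt 1 t) :
    ∀ t : ℝ, 0 ≤ t →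
      HasDerivAt
        (fun τ => (1/2) * (∫ z in (0:ℝ)..1, (C * (wzt z τ)^2 + ρ * (wtt z τ)^2))
          + Ki/2 * (wt 1 τ - pstar)^2)
        (-(b * ∫ z in (0:ℝ)..1, (wtt z t)^2) - Kp * (wtt 1 t)^2) t ∧
      -(b * ∫ z in (0:ℝ)..1, (wtt z t)^2) - Kp * (wtt 1 t)^2 ≤ 0 := by
  intro t ht
  have hwt0 : EqOn (fun τ => wt 0 τ) 0 (Ici 0) := fun s hs =>
    (hwt 0 s).eq_of_eqOn_Ici (hasDerivAt_const s 0) hclamp hs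
  have hwtt0 : wtt 0 t = 0 := (hwtt 0 t).eq_of_eqOn_Ici (hasDerivAt_const t 0) hwt0 ht
  have hpde_t : ∀ z ∈ uIcc (0:ℝ) 1, ρ * wttt z t = C * wzzt z t - b * wtt z t := fun z hz =>
    ((hwttt z t).const_mul ρ).eq_of_eqOn_Ici
      (((hwzzt z t).const_mul C).sub ((hwtt z t).const_mul b))
      (fun s hs => hpde z (uIcc_of_le (zero_le_one (α := ℝ)) ▸ hz) s hs) ht
  have hstorage := hasDerivAt_velocityStorage (fun z => hwzzt' z t) (fun z => hwztt' z t)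
    hwztt hwttt hwztc hwttc hwzztc hwzttc hwtttc hpde_t
  have hshaping : HasDerivAt (fun τ => Ki/2 * (wt 1 τ - pstar)^2)
      (Ki * (wt 1 t - pstar) * wtt 1 t) t :=
    (((hwtt 1 t).sub_const pstar).pow 2 |>.const_mul (Ki/2)).congr_deriv (by ring)
  refine ⟨(hstorage.add hshaping).congr_deriv ?_, ?_⟩
  · rw [hwtt0]
    linear_combination wtt 1 t * hcl t ht
  · have hloss : 0 ≤ ∫ z in (0:ℝ)..1, (wtt z t)^2 :=
      integral_nonneg zero_le_one fun z _ => sq_nonneg _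
    linarith [mul_nonneg hb.le hloss, mul_nonneg hKp.le (sq_nonneg (wtt 1 t))]

/-- Output shaping, dissipation identity (17) of Proposition 2:
dS_d/dt(t) = −b·∫₀¹ w_tt² dz − K_p·w_tt(1,t)² ≤ 0. -/
theorem output_shaping_dissipation
    (ρ C b : ℝ) (hρ : 0 < ρ) (hC : 0 < C) (hb : 0 < b)
    (w wz wt wzz wzt wtt : ℝ → ℝ → ℝ)
    (hwz : ∀ z t : ℝ, HasDerivAt (fun ζ => w ζ t) (wz z t) z)
    (hwt : ∀ z t : ℝ, HasDerivAt (fun τ => w z τ) (wt z t) t)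
    (hwzz : ∀ z t : ℝ, HasDerivAt (fun ζ => wz ζ t) (wzz z t) z)
    (hwzt : ∀ z t : ℝ, HasDerivAt (fun ζ => wt ζ t) (wzt z t) z)
    (hwzt' : ∀ z t : ℝ, HasDerivAt (fun τ => wz z τ) (wzt z t) t)
    (hwtt : ∀ z t : ℝ, HasDerivAt (fun τ => wt z τ) (wtt z t) t)
    (hwzc : Continuous (Function.uncurry wz))
    (hwtc : Continuous (Function.uncurry wt))
    (hwzzc : Continuous (Function.uncurry wzz))
    (hwztc : Continuous (Function.uncurry wzt))
    (hwttc : Continuous (Function.uncurry wtt))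
    (hpde : ∀ z ∈ Set.Icc (0:ℝ) 1, ∀ t : ℝ, 0 ≤ t →
      ρ * wtt z t = C * wzz z t - b * wt z t)
    (hclamp : ∀ t : ℝ, 0 ≤ t → w 0 t = 0)
    (wzzt wztt wttt : ℝ → ℝ → ℝ)
    (hwzzt : ∀ z t : ℝ, HasDerivAt (fun τ => wzz z τ) (wzzt z t) t)
    (hwzzt' : ∀ z t : ℝ, HasDerivAt (fun ζ => wzt ζ t) (wzzt z t) z)
    (hwztt : ∀ z t : ℝ, HasDerivAt (fun τ => wzt z τ) (wztt z t) t)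
    (hwztt' : ∀ z t : ℝ, HasDerivAt (fun ζ => wtt ζ t) (wztt z t) z)
    (hwttt : ∀ z t : ℝ, HasDerivAt (fun τ => wtt z τ) (wttt z t) t)
    (hwzztc : Continuous (Function.uncurry wzzt))
    (hwzttc : Continuous (Function.uncurry wztt))
    (hwtttc : Continuous (Function.uncurry wttt))
    (Ki Kp pstar : ℝ) (hKi : 0 < Ki) (hKp : 0 < Kp)
    (hcl : ∀ t : ℝ, 0 ≤ t →
      C * wzt 1 t = -Ki * (wt 1 t - pstar) - Kp * wtt 1 t) :
    ∀ t : ℝ, 0 ≤ t →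
      HasDerivAt
        (fun τ => (1/2) * (∫ z in (0:ℝ)..1, (C * (wzt z τ)^2 + ρ * (wtt z τ)^2))
          + Ki/2 * (wt 1 τ - pstar)^2)
        (-(b * ∫ z in (0:ℝ)..1, (wtt z t)^2) - Kp * (wtt 1 t)^2) t ∧
      -(b * ∫ z in (0:ℝ)..1, (wtt z t)^2) - Kp * (wtt 1 t)^2 ≤ 0 :=
  output_shaping_dissipation_general ρ C b hb w wt wzz wzt wtt hwt hwtt hwztc hwttc hpde hclamp wzzt
    wztt wttt hwzzt hwzzt' hwztt hwztt' hwttt hwzztc hwzttc hwtttc Ki Kp pstar hKp hcl
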